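/- Let (A,∘,[·,·]) be a Gel'fand-Dorfman bialgebra over K of codimension 1 in a vector space E. Define an equivalence relation ≡ on the set F(A) of GD flag datums by: (p,q,S,T,a1,k,η,D) ≡ (p',q',S',T',a1',k',η',D') if and only if p = p', q = q', η = η' and there exists a pair (a0,β) ∈ A × K* such that for all a ∈ A: (FD1) S(a) = a0∘a + βS'(a) − q(a)a0; (FD2) T(a) = a∘a0 + βT'(a) − p(a)a0; (FD3) a1 = a0∘a0 + βS'(a0) + βT'(a0) + β²a1' − k a0; (FD4) k = βk' + p(a0) + q(a0); (FD5) D(a) = βD'(a) + [a0,a] − η(a)a0. Then the map sending the ≡-class of (p,q,S,T,a1,k,η,D) to the equivalence class of the unified product GD(A, x | p,q,S,T,a1,k,η,D) is a bijection F(A)/≡ → Extd(E,A). -/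

import Mathlib

/-!
Choosing the complement `K ∙ x` identifies `E` with `A × K`. A bilinear structure on `A × K`
extending the one of `A` is determined by its values on `((a, 0), (0, 1))`, `((0, 1), (b, 0))`
and `((0, 1), (0, 1))`, i.e. by a flag datum, and it is the unified product of that datum. The GD
axioms evaluated on these generators are exactly (FN1)–(GF6), and conversely (FN1)–(GF6) give the
axioms by bilinearity. An isomorphism fixing `A` is determined by the image `a0 + β • x` of `x`,
and it intertwines two unified products exactly when (FD1)–(FD5) hold. So flag datums correspond
bijectively to the GD structures on `E` extending `A`, with `≡` matching equivalence, and the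
bijection passes to the quotients.
-/

namespace GDExt

def IsNovikov {M : Type*} [AddCommGroup M] (mul : M → M → M) : Prop :=
  (∀ a b c, mul (mul a b) c - mul a (mul b c) = mul (mul b a) c - mul b (mul a c)) ∧
  ∀ a b c, mul (mul a b) c = mul (mul a c) b

def IsLieBracket {M : Type*} [AddCommGroup M] (br : M → M → M) : Prop :=
  (∀ a, br a a = 0) ∧ ∀ a b c, br a (br b c) = br (br a b) c + br b (br a c)

def IsGD {M : Type*} [AddCommGroup M] (mul br : M → M → M) : Prop :=
  IsNovikov mul ∧ IsLieBracket br ∧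
  ∀ a b c, br a (mul b c) - br c (mul b a) + mul (br b a) c - mul (br b c) a - mul b (br a c) = 0

variable {K : Type*} [Field K]
variable {A V : Type*} [AddCommGroup A] [Module K A] [AddCommGroup V] [Module K V]

/-- First component bilinear product of the unified product `A ♮ V`. -/
def uniMul (circ : A →ₗ[K] A →ₗ[K] A) (lA rA : A →ₗ[K] Module.End K V)
    (lV rV : V →ₗ[K] Module.End K A) (f : V →ₗ[K] V →ₗ[K] A)
    (st : V →ₗ[K] V →ₗ[K] V) : A × V → A × V → A × V :=
  fun p q =>
    (circ p.1 q.1 + lV p.2 q.1 + rV q.2 p.1 + f p.2 q.2,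
     st p.2 q.2 + lA p.1 q.2 + rA q.1 p.2)

/-- Bracket of the unified product `A ♮ V`. -/
def uniBr (brk : A →ₗ[K] A →ₗ[K] A) (tl : V →ₗ[K] A →ₗ[K] V) (tr : V →ₗ[K] A →ₗ[K] A)
    (hm : V →ₗ[K] V →ₗ[K] A) (vbr : V →ₗ[K] V →ₗ[K] V) : A × V → A × V → A × V :=
  fun p q =>
    (brk p.1 q.1 + tr p.2 q.1 - tr q.2 p.1 + hm p.2 q.2,
     vbr p.2 q.2 + tl p.2 q.1 - tl q.2 p.1)

end GDExt

namespace GDExt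

variable (K : Type*) [Field K]
variable (A : Type*) [AddCommGroup A] [Module K A]

/-- The data of a Gel'fand-Dorfman flag datum. -/
structure FlagData where
  p : A →ₗ[K] K
  q : A →ₗ[K] K
  S : A →ₗ[K] A
  T : A →ₗ[K] A
  a1 : A
  k : K
  eta : A →ₗ[K] K
  D : A →ₗ[K] A

variable {K A}

/-- Conditions (FN1)-(FN10), (TD1)-(TD2) and (GF1)-(GF6) for a GD flag datum of the
GD bialgebra `(A, circ, brk)`. -/
def IsFlagDatum (circ brk : A →ₗ[K] A →ₗ[K] A) (d : FlagData K A) : Prop :=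
  -- (FN1)
  (∀ a b : A, d.p (circ a b) = d.p (circ b a)) ∧
  (∀ a b : A, d.q (circ a b) = d.q a * d.q b) ∧
  -- (FN2)
  (∀ a b : A, d.S (circ a b) = circ (d.S a) b + circ a (d.S b) + (d.q a - d.p a) • d.S b
      + d.q b • d.T a - circ (d.T a) b) ∧
  -- (FN3)
  (∀ a b : A, d.T (circ a b) - d.T (circ b a)
      = d.p b • d.T a - d.p a • d.T b + circ a (d.T b) - circ b (d.T a)) ∧
  -- (FN4)
  (∀ a : A, d.T (d.T a) = d.T (d.S a) - d.S (d.T a) + circ a d.a1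
      + (d.q a - 2 * d.p a) • d.a1 + d.k • d.T a) ∧
  -- (FN5)
  (∀ a : A, d.p (d.S a) - d.p (d.T a) = d.q (d.T a) + d.k * (d.p a - d.q a)) ∧
  -- (FN6)
  (∀ a b : A, circ (d.S a) b + d.q a • d.S b = circ (d.S b) a + d.q b • d.S a) ∧
  -- (FN7)
  (∀ a b : A, d.T (circ a b) = circ (d.T a) b + d.p a • d.S b) ∧
  -- (FN8)
  (∀ a b : A, d.p (circ a b) = d.p a * d.q b) ∧
  -- (FN9)
  (∀ a : A, d.T (d.S a) = circ d.a1 a + d.k • d.S a - d.q a • d.a1) ∧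
  -- (FN10)
  (∀ a : A, d.p (d.S a) = 0) ∧
  -- (TD1)
  (∀ a b : A, d.eta (brk a b) = 0) ∧
  -- (TD2)
  (∀ a b : A, d.D (brk a b) = brk (d.D a) b + brk a (d.D b) + d.eta a • d.D b - d.eta b • d.D a) ∧
  -- (GF1)
  (∀ a b : A, brk a (d.T b) - d.p b • d.D a - d.D (circ b a) + d.T (brk b a)
      + circ (d.D b) a + d.eta b • d.S a + circ b (d.D a) + d.eta a • d.T b = 0) ∧
  -- (GF2)
  (∀ a b : A, d.p (brk b a) + d.eta b * d.q a - d.eta (circ b a) = 0) ∧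
  -- (GF3)
  (∀ a b : A, brk a (d.S b) - d.q b • d.D a - brk b (d.S a) + d.q a • d.D b
      + circ (d.D a) b + d.eta a • d.S b - circ (d.D b) a - d.eta b • d.S a
      - d.S (brk a b) = 0) ∧
  -- (GF4)
  (∀ a b : A, d.q (brk a b) = 0) ∧
  -- (GF5)
  (∀ a : A, brk a d.a1 - d.k • d.D a - d.D (d.S a) + d.T (d.D a)
      + (2 * d.eta a) • d.a1 + d.S (d.D a) = 0) ∧
  -- (GF6)
  (∀ a : A, d.k * d.eta a - d.eta (d.S a) + d.p (d.D a) + d.q (d.D a) = 0)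

end GDExt

namespace GDExt

variable {K E : Type*} [Field K] [AddCommGroup E] [Module K E]

/-- The GD bialgebra structures on `E` containing the GD bialgebra `(A, circ, brk)`
as a subalgebra (i.e. restricting to the given operations on `A`). -/
def GDStrOn (A : Submodule K E) (circ brk : ↥A →ₗ[K] ↥A →ₗ[K] ↥A) : Type _ :=
  {s : (E →ₗ[K] E →ₗ[K] E) × (E →ₗ[K] E →ₗ[K] E) //
    IsGD (fun u v => s.1 u v) (fun u v => s.2 u v) ∧
    ∀ a b : ↥A, s.1 a b = ((circ a b : ↥A) : E) ∧ s.2 a b = ((brk a b : ↥A) : E)}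

/-- Equivalence of GD bialgebra structures on `E` containing `A` as a subalgebra:
there is a GD bialgebra isomorphism whose restriction to `A` is the identity. -/
def GDStrEquiv (A : Submodule K E) (circ brk : ↥A →ₗ[K] ↥A →ₗ[K] ↥A)
    (s s' : GDStrOn A circ brk) : Prop :=
  ∃ φ : E ≃ₗ[K] E,
    (∀ u v : E, φ (s.1.1 u v) = s'.1.1 (φ u) (φ v)) ∧
    (∀ u v : E, φ (s.1.2 u v) = s'.1.2 (φ u) (φ v)) ∧
    (∀ a : ↥A, φ (a : E) = (a : E))

end GDExt

namespace GDExt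

variable {K A : Type*} [Field K] [AddCommGroup A] [Module K A]

/-- The equivalence relation (FD1)-(FD5) on GD flag datums. -/
def FlagRel (circ brk : A →ₗ[K] A →ₗ[K] A) (d d' : FlagData K A) : Prop :=
  d.p = d'.p ∧ d.q = d'.q ∧ d.eta = d'.eta ∧
  ∃ (a0 : A) (β : K), β ≠ 0 ∧
    -- (FD1)
    (∀ a : A, d.S a = circ a0 a + β • d'.S a - d.q a • a0) ∧
    -- (FD2)
    (∀ a : A, d.T a = circ a a0 + β • d'.T a - d.p a • a0) ∧
    -- (FD3)
    (d.a1 = circ a0 a0 + β • d'.S a0 + β • d'.T a0 + (β * β) • d'.a1 - d.k • a0) ∧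
    -- (FD4)
    (d.k = β * d'.k + d.p a0 + d.q a0) ∧
    -- (FD5)
    (∀ a : A, d.D a = β • d'.D a + brk a0 a - d.eta a • a0)

end GDExt

namespace GDExt

section Unified

variable {K A : Type*} [Field K] [AddCommGroup A] [Module K A]
variable (circ brk : A →ₗ[K] A →ₗ[K] A)

/- `A ⊕ Kx` is modelled as `A × K`, with `x = (0, 1)`. -/

def unifiedMul (d : FlagData K A) : (A × K) →ₗ[K] (A × K) →ₗ[K] (A × K) :=
  LinearMap.mk₂ K (fun u v => (circ u.1 v.1 + u.2 • d.S v.1 + v.2 • d.T u.1 + (u.2 * v.2) • d.a1,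
      u.2 * v.2 * d.k + v.2 * d.p u.1 + u.2 * d.q v.1))
    (fun _ _ _ => by ext <;> simp <;> [module; ring])
    (fun _ _ _ => by ext <;> simp <;> [module; ring])
    (fun _ _ _ => by ext <;> simp <;> [module; ring])
    (fun _ _ _ => by ext <;> simp <;> [module; ring])

def unifiedBr (d : FlagData K A) : (A × K) →ₗ[K] (A × K) →ₗ[K] (A × K) :=
  LinearMap.mk₂ K (fun u v => (brk u.1 v.1 + u.2 • d.D v.1 - v.2 • d.D u.1,
      u.2 * d.eta v.1 - v.2 * d.eta u.1))
    (fun _ _ _ => by ext <;> simp <;> [module; ring])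
    (fun _ _ _ => by ext <;> simp <;> [module; ring])
    (fun _ _ _ => by ext <;> simp <;> [module; ring])
    (fun _ _ _ => by ext <;> simp <;> [module; ring])

variable {circ brk}

@[simp]
lemma unifiedMul_apply (d : FlagData K A) (a b : A) (γ δ : K) :
    unifiedMul circ d (a, γ) (b, δ) = (circ a b + γ • d.S b + δ • d.T a + (γ * δ) • d.a1,
      γ * δ * d.k + δ * d.p a + γ * d.q b) := rfl

@[simp]
lemma unifiedBr_apply (d : FlagData K A) (a b : A) (γ δ : K) :
    unifiedBr brk d (a, γ) (b, δ) = (brk a b + γ • d.D b - δ • d.D a, γ * d.eta b - δ * d.eta a) :=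
  rfl

theorem isGD_unified (hGD : IsGD (fun a b => circ a b) (fun a b => brk a b)) {d : FlagData K A}
    (hd : IsFlagDatum circ brk d) :
    IsGD (fun u v => unifiedMul circ d u v) (fun u v => unifiedBr brk d u v) := by
  obtain ⟨⟨lsym, rcom⟩, ⟨alt, jac⟩, comp⟩ := hGD
  obtain ⟨FN1p, FN1q, FN2, FN3, FN4, FN5, FN6, FN7, FN8, FN9, FN10, TD1, TD2,
    GF1, GF2, GF3, GF4, GF5, GF6⟩ := hd
  refine ⟨⟨?_, ?_⟩, ⟨?_, ?_⟩, ?_⟩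
  · rintro ⟨a, γ⟩ ⟨b, δ⟩ ⟨c, ε⟩
    simp only [unifiedMul_apply, map_add, map_smul, LinearMap.add_apply, LinearMap.smul_apply,
      smul_eq_mul, Prod.mk_sub_mk, Prod.mk.injEq]
    constructor
    · linear_combination (norm := module) lsym a b c - γ • FN2 b c + δ • FN2 a c + ε • FN3 a b
        - (γ * ε) • FN4 b + (δ * ε) • FN4 a
    · linear_combination ε * FN1p a b - γ * FN1q b c + δ * FN1q a c + (γ * ε) * FN5 b
        - (δ * ε) * FN5 a
  · rintro ⟨a, γ⟩ ⟨b, δ⟩ ⟨c, ε⟩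
    simp only [unifiedMul_apply, map_add, map_smul, LinearMap.add_apply, LinearMap.smul_apply,
      smul_eq_mul, Prod.mk.injEq]
    constructor
    · linear_combination (norm := module) rcom a b c + γ • FN6 b c - δ • FN7 a c + ε • FN7 a b
        - (γ * δ) • FN9 c + (γ * ε) • FN9 b
    · linear_combination ε * FN8 a b - δ * FN8 a c + (γ * ε) * FN10 b - (γ * δ) * FN10 c
  · rintro ⟨a, γ⟩
    simp only [unifiedBr_apply, alt, Prod.mk_eq_zero]
    constructor
    · abel
    · ring
  · rintro ⟨a, γ⟩ ⟨b, δ⟩ ⟨c, ε⟩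
    simp only [unifiedBr_apply, map_add, map_smul, map_sub, LinearMap.add_apply,
      LinearMap.smul_apply, LinearMap.sub_apply, smul_eq_mul, Prod.mk_add_mk, Prod.mk.injEq]
    constructor
    · linear_combination (norm := module) jac a b c + γ • TD2 b c - δ • TD2 a c + ε • TD2 a b
        - ε • LinearMap.IsAlt.neg alt (d.D a) b
    · linear_combination γ * TD1 b c - δ * TD1 a c + ε * TD1 a b
  · rintro ⟨a, γ⟩ ⟨b, δ⟩ ⟨c, ε⟩
    simp only [unifiedMul_apply, unifiedBr_apply, map_add, map_smul, map_sub, LinearMap.add_apply,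
      LinearMap.smul_apply, LinearMap.sub_apply, smul_eq_mul, Prod.mk_add_mk, Prod.mk_sub_mk,
      Prod.mk_eq_zero]
    constructor
    · linear_combination (norm := module) comp a b c - γ • GF1 c b + δ • GF3 a c + ε • GF1 a b
        - (γ * δ) • GF5 c + (δ * ε) • GF5 a
    · linear_combination -γ * GF2 c b + ε * GF2 a b - δ * GF4 a c - (γ * δ) * GF6 c
        + (δ * ε) * GF6 a

theorem isFlagDatum_of_isGD_unified {d : FlagData K A}
    (h : IsGD (fun u v => unifiedMul circ d u v) (fun u v => unifiedBr brk d u v)) :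
    IsFlagDatum circ brk d := by
  obtain ⟨⟨lsym, rcom⟩, ⟨-, jac⟩, comp⟩ := h
  have lsym_abx := fun a b => lsym (a, 0) (b, 0) (0, 1)
  have lsym_axb := fun a b => lsym (a, 0) (0, 1) (b, 0)
  have lsym_axx := fun a => lsym (a, 0) (0, 1) (0, 1)
  have rcom_abx := fun a b => rcom (a, 0) (b, 0) (0, 1)
  have rcom_xab := fun a b => rcom (0, 1) (a, 0) (b, 0)
  have rcom_xax := fun a => rcom (0, 1) (a, 0) (0, 1)
  have jac_xab := fun a b => jac (0, 1) (a, 0) (b, 0)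
  have comp_abx := fun a b => comp (a, 0) (b, 0) (0, 1)
  have comp_axb := fun a b => comp (a, 0) (0, 1) (b, 0)
  have comp_axx := fun a => comp (a, 0) (0, 1) (0, 1)
  simp only [unifiedMul_apply, unifiedBr_apply, map_zero, map_neg, LinearMap.zero_apply,
    LinearMap.neg_apply, zero_smul, smul_zero, one_smul, mul_zero, zero_mul, mul_one, one_mul,
    add_zero, zero_add, sub_zero, zero_sub, Prod.mk_sub_mk, Prod.mk_add_mk, Prod.mk.injEq,
    Prod.mk_eq_zero, forall_and]
    at lsym_abx lsym_axb lsym_axx rcom_abx rcom_xab rcom_xax jac_xab comp_abx comp_axb comp_axx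
  exact ⟨fun a b => by linear_combination lsym_abx.2 a b,
    fun a b => by linear_combination lsym_axb.2 a b,
    fun a b => by linear_combination (norm := module) lsym_axb.1 a b,
    fun a b => by linear_combination (norm := module) lsym_abx.1 a b,
    fun a => by linear_combination (norm := module) lsym_axx.1 a,
    fun a => by linear_combination -lsym_axx.2 a,
    fun a b => by linear_combination (norm := module) rcom_xab.1 a b,
    fun a b => by linear_combination (norm := module) rcom_abx.1 a b,
    fun a b => by linear_combination rcom_abx.2 a b,
    fun a => by linear_combination (norm := module) rcom_xax.1 a,
    fun a => by linear_combination rcom_xax.2 a,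
    fun a b => by linear_combination jac_xab.2 a b,
    fun a b => by linear_combination (norm := module) jac_xab.1 a b,
    fun a b => by linear_combination (norm := module) comp_abx.1 a b,
    fun a b => by linear_combination comp_abx.2 a b,
    fun a b => by linear_combination (norm := module) comp_axb.1 a b,
    fun a b => by linear_combination -comp_axb.2 a b,
    fun a => by linear_combination (norm := module) comp_axx.1 a,
    fun a => by linear_combination comp_axx.2 a⟩

def flagDataOf (m br : (A × K) →ₗ[K] (A × K) →ₗ[K] (A × K)) : FlagData K A where
  p := LinearMap.snd K A K ∘ₗ m.flip (0, 1) ∘ₗ LinearMap.inl K A K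
  q := LinearMap.snd K A K ∘ₗ m (0, 1) ∘ₗ LinearMap.inl K A K
  S := LinearMap.fst K A K ∘ₗ m (0, 1) ∘ₗ LinearMap.inl K A K
  T := LinearMap.fst K A K ∘ₗ m.flip (0, 1) ∘ₗ LinearMap.inl K A K
  a1 := (m (0, 1) (0, 1)).1
  k := (m (0, 1) (0, 1)).2
  eta := LinearMap.snd K A K ∘ₗ br (0, 1) ∘ₗ LinearMap.inl K A K
  D := LinearMap.fst K A K ∘ₗ br (0, 1) ∘ₗ LinearMap.inl K A K

lemma unifiedMul_flagDataOf {m : (A × K) →ₗ[K] (A × K) →ₗ[K] (A × K)}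
    (br : (A × K) →ₗ[K] (A × K) →ₗ[K] (A × K)) (hm : ∀ a b : A, m (a, 0) (b, 0) = (circ a b, 0)) :
    unifiedMul circ (flagDataOf m br) = m := by
  ext <;> simp [flagDataOf, hm, Prod.mk_zero_zero]

lemma unifiedBr_flagDataOf (m : (A × K) →ₗ[K] (A × K) →ₗ[K] (A × K))
    {br : (A × K) →ₗ[K] (A × K) →ₗ[K] (A × K)} (halt : br.IsAlt)
    (hbr : ∀ a b : A, br (a, 0) (b, 0) = (brk a b, 0)) :
    unifiedBr brk (flagDataOf m br) = br := by
  ext <;> simp [flagDataOf, hbr, Prod.mk_zero_zero, halt.self_eq_zero, ← halt.neg (0, 1)]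

lemma flagDataOf_unified (d : FlagData K A) :
    flagDataOf (unifiedMul circ d) (unifiedBr brk d) = d := by
  cases d
  simp [flagDataOf, LinearMap.ext_iff]

def shiftEquiv (a0 : A) {β : K} (hβ : β ≠ 0) : (A × K) ≃ₗ[K] (A × K) where
  toFun u := (u.1 + u.2 • a0, u.2 * β)
  invFun u := (u.1 - (u.2 * β⁻¹) • a0, u.2 * β⁻¹)
  map_add' _ _ := by ext <;> simp <;> [module; ring]
  map_smul' _ _ := by ext <;> simp <;> [module; ring]
  left_inv _ := by ext <;> simp [hβ]
  right_inv _ := by ext <;> simp [hβ]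

@[simp]
lemma shiftEquiv_apply (a0 : A) {β : K} (hβ : β ≠ 0) (a : A) (γ : K) :
    shiftEquiv a0 hβ (a, γ) = (a + γ • a0, γ * β) := rfl

variable (circ brk) in
def IsUnifiedIso (d d' : FlagData K A) (ψ : (A × K) ≃ₗ[K] (A × K)) : Prop :=
  (∀ a : A, ψ (a, 0) = (a, 0)) ∧
  (∀ u v, ψ (unifiedMul circ d u v) = unifiedMul circ d' (ψ u) (ψ v)) ∧
  (∀ u v, ψ (unifiedBr brk d u v) = unifiedBr brk d' (ψ u) (ψ v))

theorem FlagRel.isUnifiedIso_shiftEquiv (halt : brk.IsAlt) {d d' : FlagData K A}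
    (h : FlagRel circ brk d d') :
    ∃ (a0 : A) (β : K) (hβ : β ≠ 0), IsUnifiedIso circ brk d d' (shiftEquiv a0 hβ) := by
  obtain ⟨hp, hq, heta, a0, β, hβ, FD1, FD2, FD3, FD4, FD5⟩ := h
  refine ⟨a0, β, hβ, fun a => by simp, ?_, ?_⟩
  · rintro ⟨a, γ⟩ ⟨b, δ⟩
    simp only [unifiedMul_apply, shiftEquiv_apply, map_add, map_smul, LinearMap.add_apply,
      LinearMap.smul_apply, smul_eq_mul, Prod.mk.injEq, ← hp, ← hq]
    constructor
    · linear_combination (norm := module) γ • FD1 b + δ • FD2 a + (γ * δ) • FD3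
    · linear_combination (γ * δ * β) * FD4
  · rintro ⟨a, γ⟩ ⟨b, δ⟩
    simp only [unifiedBr_apply, shiftEquiv_apply, map_add, map_smul, LinearMap.add_apply,
      LinearMap.smul_apply, smul_eq_mul, Prod.mk.injEq, ← heta]
    constructor
    · linear_combination (norm := module) γ • FD5 b - δ • FD5 a + δ • halt.neg a a0
        - (γ * δ) • halt.self_eq_zero a0
    · ring

lemma IsUnifiedIso.flagRel {d d' : FlagData K A} {ψ : (A × K) ≃ₗ[K] (A × K)}
    (hψ : IsUnifiedIso circ brk d d' ψ) : FlagRel circ brk d d' := by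
  obtain ⟨hfix, hmul, hbr⟩ := hψ
  rcases hψx : ψ (0, 1) with ⟨a0, β⟩
  have hψ : ∀ (a : A) (γ : K), ψ (a, γ) = (a + γ • a0, γ * β) := fun a γ => by
    rw [show ((a, γ) : A × K) = (a, 0) + γ • (0, 1) by simp, map_add, map_smul, hfix, hψx]
    simp
  have hβ : β ≠ 0 := by
    rintro rfl
    have h : ψ (0, 1) = ψ (a0, 0) := by rw [hfix, hψx]
    simpa using congrArg Prod.snd (ψ.injective h)
  have hT := fun a => hmul (a, 0) (0, 1)
  have hS := fun b => hmul (0, 1) (b, 0)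
  have hXX := hmul (0, 1) (0, 1)
  have hD := fun b => hbr (0, 1) (b, 0)
  simp only [hψ, unifiedMul_apply, unifiedBr_apply, map_zero, LinearMap.zero_apply, zero_smul,
    smul_zero, one_smul, mul_zero, zero_mul, mul_one, one_mul, add_zero, zero_add, sub_zero,
    Prod.mk.injEq, forall_and] at hT hS hXX hD
  have hp : d.p = d'.p := LinearMap.ext fun a => mul_left_cancel₀ hβ (by linear_combination hT.2 a)
  have hq : d.q = d'.q := LinearMap.ext fun a => mul_left_cancel₀ hβ (by linear_combination hS.2 a)
  have heta : d.eta = d'.eta :=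
    LinearMap.ext fun a => mul_left_cancel₀ hβ (by linear_combination hD.2 a)
  refine ⟨hp, hq, heta, a0, β, hβ, fun a => by linear_combination (norm := module) hS.1 a,
    fun a => by linear_combination (norm := module) hT.1 a,
    by linear_combination (norm := module) hXX.1, ?_,
    fun a => by linear_combination (norm := module) hD.1 a⟩
  rw [hp, hq]
  exact mul_left_cancel₀ hβ (by linear_combination hXX.2)

lemma flagRel_iff_exists_isUnifiedIso (halt : brk.IsAlt) {d d' : FlagData K A} :
    FlagRel circ brk d d' ↔ ∃ ψ, IsUnifiedIso circ brk d d' ψ :=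
  ⟨fun h => let ⟨_, _, _, hψ⟩ := h.isUnifiedIso_shiftEquiv halt; ⟨_, hψ⟩,
    fun ⟨_, hψ⟩ => hψ.flagRel⟩

end Unified

section Transport

theorem IsGD.transport {M N : Type*} [AddCommGroup M] [AddCommGroup N] (f : M ≃+ N)
    {mul br : N → N → N} (h : IsGD mul br) :
    IsGD (fun u v => f.symm (mul (f u) (f v))) (fun u v => f.symm (br (f u) (f v))) := by
  obtain ⟨⟨lsym, rcom⟩, ⟨alt, jac⟩, comp⟩ := h
  refine ⟨⟨fun a b c => ?_, fun a b c => ?_⟩, ⟨fun a => ?_, fun a b c => ?_⟩, fun a b c => ?_⟩ <;>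
    apply f.injective <;> simp only [map_sub, map_add, map_zero, AddEquiv.apply_symm_apply]
  exacts [lsym _ _ _, rcom _ _ _, alt _, jac _ _ _, comp _ _ _]

variable {K E M : Type*} [Field K] [AddCommGroup E] [Module K E] [AddCommGroup M] [Module K M]

def bilinConj (e : E ≃ₗ[K] M) : (M →ₗ[K] M →ₗ[K] M) ≃ₗ[K] (E →ₗ[K] E →ₗ[K] E) :=
  e.symm.arrowCongr (e.symm.arrowCongr e.symm)

@[simp]
lemma bilinConj_apply (e : E ≃ₗ[K] M) (m : M →ₗ[K] M →ₗ[K] M) (u v : E) :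
    bilinConj e m u v = e.symm (m (e u) (e v)) := rfl

@[simp]
lemma bilinConj_symm_apply (e : E ≃ₗ[K] M) (m : E →ₗ[K] E →ₗ[K] E) (u v : M) :
    (bilinConj e).symm m u v = e (m (e.symm u) (e.symm v)) := rfl

end Transport

section Extension

variable {K E : Type*} [Field K] [AddCommGroup E] [Module K E] {A : Submodule K E}
  {circ brk : ↥A →ₗ[K] ↥A →ₗ[K] ↥A} (e : E ≃ₗ[K] ↥A × K)

lemma symm_apply_mk_zero (he : ∀ a : ↥A, e a = (a, 0)) (a : ↥A) :
    e.symm (a, 0) = a :=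
  e.symm_apply_eq.mpr (he a).symm

def unifiedStr (he : ∀ a : ↥A, e a = (a, 0))
    (hGD : IsGD (fun a b => circ a b) (fun a b => brk a b))
    (d : {d : FlagData K ↥A // IsFlagDatum circ brk d}) : GDStrOn A circ brk :=
  ⟨(bilinConj e (unifiedMul circ d.1), bilinConj e (unifiedBr brk d.1)),
    (isGD_unified hGD d.2).transport e.toAddEquiv,
    fun a b => by simp [he, symm_apply_mk_zero e he]⟩

lemma bilinConj_symm_mk_zero (he : ∀ a : ↥A, e a = (a, 0))
    (s : GDStrOn A circ brk) (a b : ↥A) :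
    (bilinConj e).symm s.1.1 (a, 0) (b, 0) = (circ a b, 0) ∧
      (bilinConj e).symm s.1.2 (a, 0) (b, 0) = (brk a b, 0) := by
  simp [symm_apply_mk_zero e he, s.2.2 a b, he]

lemma isGD_bilinConj_symm (s : GDStrOn A circ brk) :
    IsGD (fun u v => (bilinConj e).symm s.1.1 u v) (fun u v => (bilinConj e).symm s.1.2 u v) :=
  s.2.1.transport e.symm.toAddEquiv

lemma unified_flagDataOf_bilinConj_symm (he : ∀ a : ↥A, e a = (a, 0))
    (s : GDStrOn A circ brk) :
    let d := flagDataOf ((bilinConj e).symm s.1.1) ((bilinConj e).symm s.1.2)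
    unifiedMul circ d = (bilinConj e).symm s.1.1 ∧ unifiedBr brk d = (bilinConj e).symm s.1.2 :=
  ⟨unifiedMul_flagDataOf _ fun a b => (bilinConj_symm_mk_zero e he s a b).1,
    unifiedBr_flagDataOf _ (isGD_bilinConj_symm e s).2.1.1 fun a b =>
      (bilinConj_symm_mk_zero e he s a b).2⟩

def flagDatumEquivGDStrOn (he : ∀ a : ↥A, e a = (a, 0))
    (hGD : IsGD (fun a b => circ a b) (fun a b => brk a b)) :
    {d : FlagData K ↥A // IsFlagDatum circ brk d} ≃ GDStrOn A circ brk where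
  toFun := unifiedStr e he hGD
  invFun s := ⟨flagDataOf ((bilinConj e).symm s.1.1) ((bilinConj e).symm s.1.2), by
    apply isFlagDatum_of_isGD_unified
    rw [(unified_flagDataOf_bilinConj_symm e he s).1, (unified_flagDataOf_bilinConj_symm e he s).2]
    exact isGD_bilinConj_symm e s⟩
  left_inv d := by simp [unifiedStr, flagDataOf_unified]
  right_inv s := by
    refine Subtype.ext (Prod.ext ?_ ?_) <;>
      simp [unifiedStr, unified_flagDataOf_bilinConj_symm e he s]

lemma gdStrEquiv_unifiedStr_iff (he : ∀ a : ↥A, e a = (a, 0))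
    (hGD : IsGD (fun a b => circ a b) (fun a b => brk a b))
    {d d' : {d : FlagData K ↥A // IsFlagDatum circ brk d}} :
    GDStrEquiv A circ brk (unifiedStr e he hGD d) (unifiedStr e he hGD d') ↔
      ∃ ψ, IsUnifiedIso circ brk d.1 d'.1 ψ := by
  constructor
  · rintro ⟨φ, hmul, hbr, hfix⟩
    refine ⟨e.symm.trans (φ.trans e), fun a => ?_, fun u v => ?_, fun u v => ?_⟩
    · simp [symm_apply_mk_zero e he, hfix, he]
    · simpa [unifiedStr] using congrArg e (hmul (e.symm u) (e.symm v))
    · simpa [unifiedStr] using congrArg e (hbr (e.symm u) (e.symm v))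
  · rintro ⟨ψ, hfix, hmul, hbr⟩
    refine ⟨e.trans (ψ.trans e.symm), fun u v => ?_, fun u v => ?_, fun a => ?_⟩
    · simp [unifiedStr, hmul]
    · simp [unifiedStr, hbr]
    · simp [he, hfix, symm_apply_mk_zero e he]

lemma unifiedStr_eq (he : ∀ a : ↥A, e a = (a, 0))
    (hGD : IsGD (fun a b => circ a b) (fun a b => brk a b))
    {d : {d : FlagData K ↥A // IsFlagDatum circ brk d}} {s : GDStrOn A circ brk}
    (hs : ∀ u v, s.1.1 (e.symm u) (e.symm v) = e.symm (unifiedMul circ d.1 u v) ∧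
      s.1.2 (e.symm u) (e.symm v) = e.symm (unifiedBr brk d.1 u v)) :
    unifiedStr e he hGD d = s := by
  refine Subtype.ext (Prod.ext ?_ ?_) <;> ext u v
  · simpa [unifiedStr] using ((hs (e u) (e v)).1).symm
  · simpa [unifiedStr] using ((hs (e u) (e v)).2).symm

end Extension

lemma exists_linearEquiv_prod_of_isCompl {K E : Type*} [Field K] [AddCommGroup E]
    [Module K E] {A : Submodule K E} {x : E} (hx : x ∉ A) (hc : IsCompl A (K ∙ x)) :
    ∃ e : E ≃ₗ[K] ↥A × K, ∀ (a : ↥A) (γ : K), e.symm (a, γ) = a + γ • x := by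
  have hx0 : x ≠ 0 := fun h => hx (h ▸ A.zero_mem)
  refine ⟨(Submodule.prodEquivOfIsCompl A _ hc).symm.trans
    ((LinearEquiv.refl K ↥A).prodCongr (LinearEquiv.toSpanNonzeroSingleton K E x hx0).symm),
    fun a γ => ?_⟩
  simp [LinearEquiv.toSpanNonzeroSingleton_apply]

/-- Theorem 4.3: for `A` of codimension 1 in `E`, `F(A)/≡ → Extd(E,A)`,
sending the class of a flag datum to the class of the associated unified product
`GD(A, x | p,q,S,T,a1,k,η,D)`, is a bijection. -/
theorem flag_quotient_bijective_extd
    {K E : Type*} [Field K] [AddCommGroup E] [Module K E]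
    (A : Submodule K E) (x : E) (hx : x ∉ A) (hc : IsCompl A (K ∙ x))
    (circ brk : ↥A →ₗ[K] ↥A →ₗ[K] ↥A)
    (hGD : IsGD (fun a b => circ a b) (fun a b => brk a b)) :
    ∃ G : Quot (fun d d' : {d : FlagData K ↥A // IsFlagDatum circ brk d} =>
            FlagRel circ brk d.1 d'.1)
        → Quot (GDStrEquiv A circ brk),
      Function.Bijective G ∧
      ∀ (d : {d : FlagData K ↥A // IsFlagDatum circ brk d}) (s : GDStrOn A circ brk),
        (∀ (a b : ↥A) (γ δ : K),
          s.1.1 ((a : E) + γ • x) ((b : E) + δ • x)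
            = ((circ a b : ↥A) : E) + γ • ((d.1.S b : ↥A) : E) + δ • ((d.1.T a : ↥A) : E)
              + (γ * δ) • ((d.1.a1 : ↥A) : E)
              + (γ * δ * d.1.k + δ * d.1.p a + γ * d.1.q b) • x ∧
          s.1.2 ((a : E) + γ • x) ((b : E) + δ • x)
            = ((brk a b : ↥A) : E) + γ • ((d.1.D b : ↥A) : E) - δ • ((d.1.D a : ↥A) : E)
              + (γ * d.1.eta b - δ * d.1.eta a) • x) →
        G (Quot.mk _ d) = Quot.mk _ s := by
  obtain ⟨e, he⟩ := exists_linearEquiv_prod_of_isCompl hx hc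
  have heA : ∀ a : ↥A, e a = (a, 0) := fun a => e.eq_symm_apply.mp (by simp [he])
  have hrel d d' : FlagRel circ brk d.1 d'.1 ↔
      GDStrEquiv A circ brk (flagDatumEquivGDStrOn e heA hGD d)
        (flagDatumEquivGDStrOn e heA hGD d') :=
    (flagRel_iff_exists_isUnifiedIso hGD.2.1.1).trans (gdStrEquiv_unifiedStr_iff e heA hGD).symm
  refine ⟨Quot.congr _ hrel, (Quot.congr _ hrel).bijective, fun d s hs => ?_⟩
  rw [Quot.congr_mk]
  congr 1
  refine unifiedStr_eq e heA hGD fun ⟨a, γ⟩ ⟨b, δ⟩ => ?_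
  obtain ⟨hmul, hbr⟩ := hs a b γ δ
  simp only [he, unifiedMul_apply, unifiedBr_apply, hmul, hbr, Submodule.coe_add,
    Submodule.coe_sub, Submodule.coe_smul, and_self]

end GDExt
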